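/- For each integer s ≥ 2 there exists a connected graph G whose complement has exactly two connected components, both cliques, and rc(G) = 4. (Concretely, if the complement of G is the disjoint union of a clique on s ≥ 2 vertices and a clique on t ≥ 3^s + 1 vertices, then G = K_{s,t} and rc(G) = 4.) -/
import Mathlib

open SimpleGraph

/-- A graph `G` is rainbow connected under edge-coloring `c` if any two vertices are
joined by a path whose edges receive pairwise distinct colors. -/
def RainbowConnected {V : Type*} (G : SimpleGraph V) (c : Sym2 V → ℕ) : Prop :=
  ∀ u v : V, ∃ p : G.Walk u v, p.IsPath ∧ (p.edges.map c).Nodup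

/-- The rainbow connection number: the least number of colors in an edge-coloring
making `G` rainbow connected. -/
noncomputable def rc {V : Type*} [Fintype V] (G : SimpleGraph V) : ℕ :=
  sInf {n | ∃ c : Sym2 V → ℕ, (∀ e ∈ G.edgeSet, c e < n) ∧ RainbowConnected G c}

/-- Least `n` with `n ^ s ≥ t`, i.e. `⌈t^(1/s)⌉`. -/
noncomputable def ceilRoot (s t : ℕ) : ℕ := sInf {n | t ≤ n ^ s}

section Helpers

variable {V : Type*} {G : SimpleGraph V} (c : Sym2 V → ℕ)

lemma rb_path1 {u v : V} (h : G.Adj u v) :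
    ∃ p : G.Walk u v, p.IsPath ∧ (p.edges.map c).Nodup := by
  refine ⟨.cons h .nil, ?_, ?_⟩
  · simp [Walk.isPath_def, h.ne]
  · simp

lemma rb_path2 {u m v : V} (h1 : G.Adj u m) (h2 : G.Adj m v) (huv : u ≠ v)
    (hc : c s(u,m) ≠ c s(m,v)) :
    ∃ p : G.Walk u v, p.IsPath ∧ (p.edges.map c).Nodup := by
  refine ⟨.cons h1 (.cons h2 .nil), ?_, ?_⟩
  · simp [Walk.isPath_def, h1.ne, h2.ne, huv]
  · simp [hc]

lemma rb_path4 {u a b d v : V}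
    (h1 : G.Adj u a) (h2 : G.Adj a b) (h3 : G.Adj b d) (h4 : G.Adj d v)
    (hub : u ≠ b) (hud : u ≠ d) (huv : u ≠ v) (had : a ≠ d) (hav : a ≠ v) (hbv : b ≠ v)
    (c12 : c s(u,a) ≠ c s(a,b)) (c13 : c s(u,a) ≠ c s(b,d)) (c14 : c s(u,a) ≠ c s(d,v))
    (c23 : c s(a,b) ≠ c s(b,d)) (c24 : c s(a,b) ≠ c s(d,v)) (c34 : c s(b,d) ≠ c s(d,v)) :
    ∃ p : G.Walk u v, p.IsPath ∧ (p.edges.map c).Nodup := by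
  refine ⟨.cons h1 (.cons h2 (.cons h3 (.cons h4 .nil))), ?_, ?_⟩
  · simp [Walk.isPath_def, h1.ne, h2.ne, h3.ne, h4.ne, hub, hud, huv, had, hav, hbv]
  · simp [c12, c13, c14, c23, c24, c34]

end Helpers

/-- Side indicator for vertices of a sum type. -/
def sideNat {α β : Type*} : α ⊕ β → ℕ := Sum.elim (fun _ => 0) (fun _ => 1)

lemma cbp_parity {α β : Type*} {u v : α ⊕ β}
    (p : (completeBipartiteGraph α β).Walk u v) :
    (p.length + sideNat u + sideNat v) % 2 = 0 := by
  induction p with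
  | nil => rename_i x; cases x <;> simp [sideNat]
  | @cons x m y h q ih =>
    have hxm : sideNat x + sideNat m = 1 := by
      cases x <;> cases m <;> simp_all [sideNat]
    simp only [Walk.length_cons]
    omega

/-- The color value function on the two sides. -/
def bcg {s t : ℕ} (i : Fin s) (j : Fin t) : ℕ :=
  if (i : ℕ) = 0 then (j : ℕ) % 2 else 2 + ((j : ℕ) / 2) % 2

/-- The coloring as a symmetric function. -/
def bcf {s t : ℕ} : (Fin s ⊕ Fin t) → (Fin s ⊕ Fin t) → ℕ
  | .inl i, .inr j => bcg i j
  | .inr j, .inl i => bcg i j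
  | _, _ => 0

/-- The 4-coloring of `K_{s,t}`. -/
def bpColor (s t : ℕ) : Sym2 (Fin s ⊕ Fin t) → ℕ :=
  Sym2.lift ⟨bcf, fun a b => by cases a <;> cases b <;> rfl⟩

@[simp] lemma bpColor_lr {s t : ℕ} (i : Fin s) (j : Fin t) :
    bpColor s t s(Sum.inl i, Sum.inr j) = bcg i j := rfl

@[simp] lemma bpColor_rl {s t : ℕ} (i : Fin s) (j : Fin t) :
    bpColor s t s(Sum.inr j, Sum.inl i) = bcg i j := rfl

/-- if the complement of G is the disjoint union of cliques on s ≥ 2 and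
t ≥ 3^s + 1 vertices, i.e. G = K_{s,t}, then rc(G) = 4. -/
theorem rc_completeBipartite_eq_four (s t : ℕ) (hs : 2 ≤ s) (ht : 3 ^ s + 1 ≤ t) :
    rc (completeBipartiteGraph (Fin s) (Fin t)) = 4 := by
  have h9 : 9 ≤ 3 ^ s := by
    calc (9 : ℕ) = 3 ^ 2 := by norm_num
    _ ≤ 3 ^ s := Nat.pow_le_pow_right (by norm_num) hs
  have ht4 : 4 ≤ t := by omega
  set G := completeBipartiteGraph (Fin s) (Fin t) with hG
  have hadj : ∀ (i : Fin s) (j : Fin t), G.Adj (Sum.inl i) (Sum.inr j) := by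
    intro i j; simp [hG]
  have hadj' : ∀ (i : Fin s) (j : Fin t), G.Adj (Sum.inr j) (Sum.inl i) :=
    fun i j => (hadj i j).symm
  have hmem : ∃ c : Sym2 (Fin s ⊕ Fin t) → ℕ,
      (∀ e ∈ G.edgeSet, c e < 4) ∧ RainbowConnected G c := by
    refine ⟨bpColor s t, ?_, ?_⟩
    · intro e he
      induction e using Sym2.ind with
      | _ a b =>
        rw [mem_edgeSet, hG] at he
        rcases a with i | j <;> rcases b with k | l <;> simp at he <;>
          simp [bcg] <;> split <;> omega
    · intro u v
      rcases u with i | j <;> rcases v with k | l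
      · -- both left
        by_cases hik : i = k
        · exact hik ▸ ⟨.nil, by simp⟩
        by_cases hi0 : (i : ℕ) = 0
        · by_cases hk0 : (k : ℕ) = 0
          · exact absurd (Fin.ext (by omega)) hik
          · refine rb_path2 _ (hadj i ⟨0, by omega⟩) (hadj' k ⟨0, by omega⟩)
              (by simp [hik]) ?_
            simp [bcg, hi0, hk0]
        · by_cases hk0 : (k : ℕ) = 0
          · refine rb_path2 _ (hadj i ⟨0, by omega⟩) (hadj' k ⟨0, by omega⟩)
              (by simp [hik]) ?_
            simp [bcg, hi0, hk0]
          · -- both nonzero: length-4 path through inr 0, inl 0, inr 3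
            refine rb_path4 _ (hadj i ⟨0, by omega⟩) (hadj' ⟨0, by omega⟩ ⟨0, by omega⟩)
              (hadj ⟨0, by omega⟩ ⟨3, by omega⟩) (hadj' k ⟨3, by omega⟩)
              ?_ ?_ (by simp [hik]) ?_ ?_ ?_ ?_ ?_ ?_ ?_ ?_ ?_
            all_goals simp [Fin.ext_iff, bcg, hi0, hk0] <;> omega
      · exact rb_path1 _ (hadj i l)
      · exact rb_path1 _ (hadj' k j)
      · -- both right
        by_cases hjl : j = l
        · exact hjl ▸ ⟨.nil, by simp⟩
        have hjlv : (j : ℕ) ≠ (l : ℕ) := fun h => hjl (Fin.ext h)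
        by_cases h2 : (j : ℕ) % 2 = (l : ℕ) % 2
        · by_cases h4 : ((j : ℕ) / 2) % 2 = ((l : ℕ) / 2) % 2
          · -- length-4 path through inl 0, inr w, inl 1
            set w : Fin t := ⟨3 - (j : ℕ) % 4, by omega⟩ with hw
            have hwv : (w : ℕ) = 3 - (j : ℕ) % 4 := rfl
            refine rb_path4 _ (hadj' ⟨0, by omega⟩ j) (hadj ⟨0, by omega⟩ w)
              (hadj' ⟨1, by omega⟩ w) (hadj ⟨1, by omega⟩ l)
              ?_ ?_ (by simp [hjl]) ?_ ?_ ?_ ?_ ?_ ?_ ?_ ?_ ?_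
            all_goals simp [Fin.ext_iff, bcg, hwv] <;> omega
          · refine rb_path2 _ (hadj' ⟨1, by omega⟩ j) (hadj ⟨1, by omega⟩ l)
              (by simp [hjl]) ?_
            simp [bcg]; omega
        · refine rb_path2 _ (hadj' ⟨0, by omega⟩ j) (hadj ⟨0, by omega⟩ l)
            (by simp [hjl]) ?_
          simp [bcg]; omega
  refine Nat.le_antisymm (Nat.sInf_le hmem) ?_
  -- 4 ≤ rc : no coloring with fewer colors works
  · refine le_csInf ⟨4, hmem⟩ ?_
    rintro n ⟨c, hc, hrb⟩
    by_contra hn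
    push_neg at hn
    have hn3 : n ≤ 3 := by omega
    have hφmem : ∀ (j : Fin t) (i : Fin s), c s(Sum.inl i, Sum.inr j) < 3 := by
      intro j i
      have : s(Sum.inl i, Sum.inr j) ∈ G.edgeSet := by
        rw [mem_edgeSet]; exact hadj i j
      exact lt_of_lt_of_le (hc _ this) hn3
    set φ : Fin t → (Fin s → Fin 3) :=
      fun j i => ⟨c s(Sum.inl i, Sum.inr j), hφmem j i⟩ with hφdef
    have hcard : Fintype.card (Fin s → Fin 3) < Fintype.card (Fin t) := by
      simp; omega
    obtain ⟨j, l, hjl, hφ⟩ := Fintype.exists_ne_map_eq_of_card_lt φ hcard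
    have hφ' : ∀ i : Fin s, c s(Sum.inl i, Sum.inr j) = c s(Sum.inl i, Sum.inr l) := by
      intro i
      have := congrFun hφ i
      simpa [hφdef, Fin.ext_iff] using this
    obtain ⟨p, hp, hnd⟩ := hrb (Sum.inr j) (Sum.inr l)
    -- all colors on p are < 3
    have hlt : ∀ x ∈ p.edges.map c, x < 3 := by
      intro x hx
      obtain ⟨e, he, rfl⟩ := List.mem_map.mp hx
      exact lt_of_lt_of_le (hc e (p.edges_subset_edgeSet he)) hn3
    have hlen3 : p.length ≤ 3 := by
      have hsub : (p.edges.map c).toFinset ⊆ Finset.range 3 := by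
        intro x hx
        simp only [List.mem_toFinset] at hx
        simpa using hlt x hx
      have hcard3 := Finset.card_le_card hsub
      rw [List.toFinset_card_of_nodup hnd, Finset.card_range, List.length_map,
        Walk.length_edges] at hcard3
      exact hcard3
    have hpar := cbp_parity p
    simp [sideNat] at hpar
    have hne0 : p.length ≠ 0 := fun h0 =>
      hjl (Sum.inr.inj (Walk.eq_of_length_eq_zero h0))
    have hlen2 : p.length = 2 := by omega
    -- destructure the walk
    cases p with
    | nil => simp at hlen2
    | @cons _ m _ h1 q =>
      cases q with
      | nil => simp at hlen2
      | cons h2 q2 =>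
        cases q2 with
        | nil =>
          rcases m with i | j'
          · have hcne : c s(Sum.inr j, Sum.inl i) ≠ c s(Sum.inl i, Sum.inr l) := by
              simpa using hnd
            apply hcne
            rw [Sym2.eq_swap]
            exact hφ' i
          · simp [hG] at h1
        | cons h3 q3 => simp only [Walk.length_cons] at hlen2; omega
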